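/- Assume K has characteristic 0. (i) For every n with 2 ≤ n ≤ 5, the only K-linear combination f of the degree-n commutative nonassociative monomials in K(x) satisfying ε(f) = 0 and ∂_x(f) = 0 is f = 0 (there is no homogeneous Peirce-evanescent identity of type [n] for n ≤ 5). (ii) For every n ≥ 6, the K-vector space of K-linear combinations f of degree-n monomials satisfying ε(f) = 0 and ∂_x(f) = 0 has dimension at least W_n − n + 2, where W_n is the number of commutative nonassociative monomials of degree n in one variable (the Wedderburn–Etherington number). -/

import Mathlib

namespace Evanescent

universe u v

variable {T : Type u}

/-- The commutativity relation on the free magma on `T`. -/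
inductive CommRel (T : Type u) : FreeMagma T → FreeMagma T → Prop
  | comm (a b : FreeMagma T) : CommRel T (a * b) (b * a)
  | mul_left {a b : FreeMagma T} (c : FreeMagma T) :
      CommRel T a b → CommRel T (a * c) (b * c)
  | mul_right (c : FreeMagma T) {a b : FreeMagma T} :
      CommRel T a b → CommRel T (c * a) (c * b)

/-- The free commutative magma on `T`: the set of commutative nonassociative
monomials (words) in the variables `T`. -/
def FreeCommMagma (T : Type u) : Type u := Quot (CommRel T)

namespace FreeCommMagma

instance : Mul (FreeCommMagma T) :=
  ⟨Quot.map₂ (· * ·) (fun a _ _ h => CommRel.mul_right a h)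
    (fun _ _ b h => CommRel.mul_left b h)⟩

/-- The class of a nonassociative word in the free commutative magma. -/
def mk (w : FreeMagma T) : FreeCommMagma T := Quot.mk (CommRel T) w

/-- The generator of the free commutative magma corresponding to a variable. -/
def of (t : T) : FreeCommMagma T := mk (FreeMagma.of t)

@[simp] lemma mk_mul (a b : FreeMagma T) : mk a * mk b = mk (a * b) := rfl

protected lemma mul_comm (a b : FreeCommMagma T) : a * b = b * a := by
  induction a using Quot.ind
  induction b using Quot.ind
  exact Quot.sound (CommRel.comm _ _)

instance : CommMagma (FreeCommMagma T) := ⟨FreeCommMagma.mul_comm⟩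

end FreeCommMagma

section Peirce

variable (R : Type v) [Semiring R] [DecidableEq T]

/-- The Peirce polynomial of a (noncommutative) nonassociative word, with
coefficients in `R`. -/
noncomputable def peirceAux (i : T) : FreeMagma T → Polynomial R
  | .of j => if j = i then 1 else 0
  | .mul u v => Polynomial.X * (peirceAux i u + peirceAux i v)

@[simp] lemma peirceAux_mul (i : T) (u v : FreeMagma T) :
    peirceAux R i (u * v) = Polynomial.X * (peirceAux R i u + peirceAux R i v) := rfl

@[simp] lemma peirceAux_of (i j : T) :
    peirceAux R i (FreeMagma.of j) = if j = i then 1 else 0 := rfl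

/-- The number of occurrences of the variable `i` in a nonassociative word. -/
def countAux (i : T) : FreeMagma T → ℕ
  | .of j => if j = i then 1 else 0
  | .mul u v => countAux i u + countAux i v

@[simp] lemma countAux_mul (i : T) (u v : FreeMagma T) :
    countAux i (u * v) = countAux i u + countAux i v := rfl

lemma peirceAux_respects (i : T) {a b : FreeMagma T} (h : CommRel T a b) :
    peirceAux R i a = peirceAux R i b := by
  induction h with
  | comm a b => simp [add_comm]
  | mul_left c h ih => simp [ih]
  | mul_right c h ih => simp [ih]

lemma countAux_respects (i : T) {a b : FreeMagma T} (h : CommRel T a b) :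
    countAux i a = countAux i b := by
  induction h with
  | comm a b => simp [Nat.add_comm]
  | mul_left c h ih => simp [ih]
  | mul_right c h ih => simp [ih]

/-- The Peirce polynomial `∂ᵢ(w)` of a commutative nonassociative monomial `w`,
determined by `∂ᵢ(tᵢ) = 1`, `∂ᵢ(tⱼ) = 0` for `j ≠ i`, and
`∂ᵢ(u·v) = X·(∂ᵢ(u) + ∂ᵢ(v))`. -/
noncomputable def FreeCommMagma.peirce (i : T) : FreeCommMagma T → Polynomial R :=
  Quot.lift (peirceAux R i) fun _ _ h => peirceAux_respects R i h

/-- The number of occurrences (degree) of the variable `i` in a commutative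
nonassociative monomial. -/
def FreeCommMagma.count (i : T) : FreeCommMagma T → ℕ :=
  Quot.lift (countAux i) fun _ _ h => countAux_respects i h

end Peirce

/-- Principal powers of an element of a magma: `ppow a n = a^(n+1)`,
i.e. `ppow a 0 = a` and `ppow a (n+1) = a * (ppow a n)`. -/
def ppow {M : Type v} [Mul M] (a : M) : ℕ → M
  | 0 => a
  | n + 1 => a * ppow a n

/-- Iterated left multiplication: `lpow a r g = a^{{r}} g`, i.e. `lpow a 0 g = g` and
`lpow a (r+1) g = a * (lpow a r g)`. -/
def lpow {M : Type v} [Mul M] (a : M) : ℕ → M → M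
  | 0, g => g
  | r + 1, g => a * lpow a r g

section Algebra

variable (K : Type v) [Field K]

/-- A commutative nonassociative monomial, viewed as an element of the free
commutative nonassociative algebra `K(T)` (realized as the magma algebra of the
free commutative magma). -/
noncomputable def mono (w : FreeCommMagma T) : MonoidAlgebra K (FreeCommMagma T) :=
  MonoidAlgebra.single w 1

/-- The augmentation (sum of the coefficients) of an element of the free
commutative nonassociative algebra. -/
noncomputable def aug : MonoidAlgebra K (FreeCommMagma T) →ₗ[K] K :=
  Finsupp.lsum K (fun _ => LinearMap.id) ∘ₗ (MonoidAlgebra.coeffLinearEquiv K).toLinearMap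

/-- The Peirce polynomial `∂ᵢ : K(T) → K[X]`, the `K`-linear map determined on
monomials by `∂ᵢ(tᵢ) = 1`, `∂ᵢ(tⱼ) = 0` for `j ≠ i`, and `∂ᵢ(u·v) = X·(∂ᵢ(u) + ∂ᵢ(v))`. -/
noncomputable def Dp [DecidableEq T] (i : T) :
    MonoidAlgebra K (FreeCommMagma T) →ₗ[K] Polynomial K :=
  Finsupp.lsum K (fun w => LinearMap.toSpanSingleton K (Polynomial K)
    (FreeCommMagma.peirce K i w)) ∘ₗ (MonoidAlgebra.coeffLinearEquiv K).toLinearMap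

/-- The free commutative nonassociative algebra is commutative. -/
lemma fca_mul_comm (f g : MonoidAlgebra K (FreeCommMagma T)) : f * g = g * f := by
  rw [MonoidAlgebra.mul_def, MonoidAlgebra.mul_def, Finsupp.sum_comm]
  refine Finsupp.sum_congr fun a _ => Finsupp.sum_congr fun c _ => ?_
  rw [FreeCommMagma.mul_comm, mul_comm (f.coeff c) (g.coeff a)]

end Algebra

section Subst

variable (K : Type v) [Field K] {A : Type*} [Mul A]

/-- Evaluation of a nonassociative word under a substitution of the variables. -/
def evalAux (ρ : T → A) : FreeMagma T → A
  | .of t => ρ t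
  | .mul u v => evalAux ρ u * evalAux ρ v

@[simp] lemma evalAux_mul (ρ : T → A) (u v : FreeMagma T) :
    evalAux ρ (u * v) = evalAux ρ u * evalAux ρ v := rfl

/-- Evaluation of a commutative nonassociative monomial in a commutative magma
under a substitution of the variables. -/
def FreeCommMagma.eval (hA : ∀ a b : A, a * b = b * a) (ρ : T → A) :
    FreeCommMagma T → A :=
  Quot.lift (evalAux ρ) (by
    intro a b h
    induction h with
    | comm a b => exact hA _ _
    | mul_left c h ih => simp [ih]
    | mul_right c h ih => simp [ih])

/-- The substitution homomorphism `ρ̂ : K(T) → A` extending a substitution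
`ρ : T → A` of the variables, for `A` a commutative nonassociative `K`-algebra. -/
noncomputable def subst [AddCommMonoid A] [Module K A]
    (hA : ∀ a b : A, a * b = b * a) (ρ : T → A)
    (f : MonoidAlgebra K (FreeCommMagma T)) : A :=
  f.coeff.sum fun w c => c • FreeCommMagma.eval hA ρ w

end Subst

/-- The list of the leaves of a nonassociative word (a rooted binary tree with
leaves labeled by the variables), together with their heights. -/
def leaves : FreeMagma T → List (T × ℕ)
  | .of t => [(t, 0)]
  | .mul u v => (leaves u ++ leaves v).map fun p => (p.1, p.2 + 1)

end Evanescent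
namespace Evanescent

/-- The single variable `x` of `K(x)`, as a monomial. -/
def x1 : FreeCommMagma Unit := FreeCommMagma.of ()

/-- The subspace of homogeneous Peirce-evanescent identities of degree `n` in `K(x)`:
linear combinations of degree-`n` monomials with zero augmentation and zero Peirce
polynomial. -/
noncomputable def homEvan (K : Type*) [Field K] (n : ℕ) :
    Submodule K (MonoidAlgebra K (FreeCommMagma Unit)) :=
  (Submodule.span K (mono K '' {w : FreeCommMagma Unit | FreeCommMagma.count () w = n}))
    ⊓ LinearMap.ker (aug K) ⊓ LinearMap.ker (Dp K ())

/-- The Wedderburn–Etherington number: the number of commutative nonassociative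
monomials of degree `n` in one variable. -/
noncomputable def Wn (n : ℕ) : ℕ :=
  Nat.card {w : FreeCommMagma Unit // FreeCommMagma.count () w = n}

/-!
The Peirce polynomial of a monomial `w` of degree `n` is `∑ X ^ h` over the leaves of `w`, `h`
being the height of the leaf. So it has no constant term (for `n ≥ 2`), has degree `< n`, takes
the value `n` at `X = 1`, and the value `1` at `X = 1/2` (Kraft's equality `∑ 2⁻ʰ = 1` for a
full binary tree). Hence if `f` is homogeneous of degree `n ≥ 3` and the coefficients of
`X², …, Xⁿ⁻¹` in `∂ₓ f` vanish, then `∂ₓ f = c X` with `c = n ε(f)` and `c / 2 = ε(f)`, which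
forces `ε(f) = c = 0`. The evanescent identities of degree `n` are thus cut out of the
`Wₙ`-dimensional span of the degree-`n` monomials by `n - 2` linear conditions.

For `n ≤ 5` there are at most three monomials of degree `n`, and comparing a few coefficients
of their Peirce polynomials together with the augmentation shows that no nontrivial
combination is evanescent.
-/

open Polynomial Module

namespace FreeCommMagma

variable {T : Type*}

@[elab_as_elim]
lemma induction_on {C : FreeCommMagma T → Prop} (w : FreeCommMagma T)
    (of : ∀ t, C (of t)) (mul : ∀ a b, C a → C b → C (a * b)) : C w := by
  induction w using Quot.ind with | _ w => ?_
  induction w with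
  | ih1 t => exact of t
  | ih2 u v hu hv => exact mul (mk u) (mk v) hu hv

lemma eq_of_or_exists_eq_mul (w : FreeCommMagma T) : (∃ t, w = of t) ∨ ∃ a b, w = a * b := by
  induction w using Quot.ind with | _ w => ?_
  cases w with
  | of t => exact .inl ⟨t, rfl⟩
  | mul u v => exact .inr ⟨mk u, mk v, rfl⟩

variable [DecidableEq T] (R : Type*) [Semiring R]

@[simp] lemma count_of (i j : T) : count i (of j) = if j = i then 1 else 0 := rfl

@[simp] lemma count_mul (i : T) (a b : FreeCommMagma T) :
    count i (a * b) = count i a + count i b := by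
  induction a using Quot.ind
  induction b using Quot.ind
  rfl

@[simp] lemma peirce_of (i j : T) : peirce R i (of j) = if j = i then 1 else 0 := rfl

@[simp] lemma peirce_mul (i : T) (a b : FreeCommMagma T) :
    peirce R i (a * b) = X * (peirce R i a + peirce R i b) := by
  induction a using Quot.ind
  induction b using Quot.ind
  rfl

lemma eval_one_peirce {S : Type*} [CommSemiring S] (i : T) (w : FreeCommMagma T) :
    (peirce S i w).eval 1 = count i w := by
  induction w using induction_on with
  | of j => by_cases h : j = i <;> simp [h]
  | mul a b ha hb => simp [ha, hb]

end FreeCommMagma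

open FreeCommMagma

section Algebra

variable {T : Type*} (K : Type*) [Field K]

@[simp] lemma aug_mono (w : FreeCommMagma T) : aug K (mono K w) = 1 := by
  simp [aug, mono]

@[simp] lemma Dp_mono [DecidableEq T] (i : T) (w : FreeCommMagma T) :
    Dp K i (mono K w) = peirce K i w := by
  simp [Dp, mono]

end Algebra

@[simp] lemma count_x1 : count () x1 = 1 := rfl

@[simp] lemma peirce_x1 (R : Type*) [Semiring R] : peirce R () x1 = 1 := rfl

lemma one_le_count (w : FreeCommMagma Unit) : 1 ≤ count () w := by
  induction w using induction_on with
  | of => simp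
  | mul a b ha _ => simp only [count_mul]; omega

lemma count_eq_one_iff {w : FreeCommMagma Unit} : count () w = 1 ↔ w = x1 := by
  refine ⟨fun h => ?_, fun h => h ▸ count_x1⟩
  obtain ⟨t, rfl⟩ | ⟨a, b, rfl⟩ := eq_of_or_exists_eq_mul w
  · rfl
  · have := one_le_count a; have := one_le_count b; simp only [count_mul] at h; omega

lemma exists_eq_mul_of_two_le_count {w : FreeCommMagma Unit} (h : 2 ≤ count () w) :
    ∃ a b, w = a * b ∧ count () a ≤ count () b := by
  obtain ⟨t, rfl⟩ | ⟨a, b, rfl⟩ := eq_of_or_exists_eq_mul w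
  · simp at h
  · rcases le_total (count () a) (count () b) with hab | hba
    · exact ⟨a, b, rfl, hab⟩
    · exact ⟨b, a, mul_comm a b, hba⟩

section UnivariatePeirce

variable {K : Type*} [Field K]

lemma eval_half_peirce [NeZero (2 : K)] (w : FreeCommMagma Unit) :
    (peirce K () w).eval 2⁻¹ = 1 := by
  induction w using induction_on with
  | of => simp
  | mul a b ha hb => simp [ha, hb, one_add_one_eq_two, two_ne_zero]

lemma coeff_peirce_of_count_le {w : FreeCommMagma Unit} {k : ℕ} (hk : count () w ≤ k) :
    (peirce K () w).coeff k = 0 := by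
  induction w using induction_on generalizing k with
  | of => simpa [coeff_one, Nat.one_le_iff_ne_zero] using hk
  | mul a b ha hb =>
    have := one_le_count a
    have := one_le_count b
    simp only [count_mul] at hk
    obtain ⟨k, rfl⟩ : ∃ j, k = j + 1 := ⟨k - 1, by omega⟩
    simp only [peirce_mul, coeff_X_mul, coeff_add]
    rw [ha (by omega), hb (by omega), add_zero]

lemma coeff_zero_peirce_of_two_le_count {w : FreeCommMagma Unit} (hw : 2 ≤ count () w) :
    (peirce K () w).coeff 0 = 0 := by
  obtain ⟨a, b, rfl, -⟩ := exists_eq_mul_of_two_le_count hw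
  simp

end UnivariatePeirce

lemma finite_setOf_count_le (n : ℕ) : {w : FreeCommMagma Unit | count () w ≤ n}.Finite := by
  induction n with
  | zero =>
    exact Set.finite_empty.subset fun w (hw : count () w ≤ 0) =>
      absurd (one_le_count w) (by omega)
  | succ n ih =>
    refine ((ih.image2 (· * ·) ih).insert x1).subset fun w (hw : count () w ≤ n + 1) => ?_
    obtain ⟨t, rfl⟩ | ⟨a, b, rfl⟩ := eq_of_or_exists_eq_mul w
    · exact Set.mem_insert _ _
    · have := one_le_count a
      have := one_le_count b
      simp only [count_mul] at hw
      exact Set.mem_insert_of_mem _ (Set.mem_image2_of_mem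
        (show count () a ≤ n by omega) (show count () b ≤ n by omega))

lemma finite_setOf_count_eq (n : ℕ) : {w : FreeCommMagma Unit | count () w = n}.Finite :=
  (finite_setOf_count_le n).subset fun _ (hw : count () _ = n) => hw.le

lemma count_eq_two_iff {w : FreeCommMagma Unit} : count () w = 2 ↔ w = x1 * x1 := by
  refine ⟨fun h => ?_, fun h => by simp [h]⟩
  obtain ⟨a, b, rfl, hab⟩ := exists_eq_mul_of_two_le_count h.ge
  have := one_le_count a
  simp only [count_mul] at h
  rw [count_eq_one_iff.mp (by omega : count () a = 1),
    count_eq_one_iff.mp (by omega : count () b = 1)]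

lemma count_eq_three_iff {w : FreeCommMagma Unit} : count () w = 3 ↔ w = x1 * (x1 * x1) := by
  refine ⟨fun h => ?_, fun h => by simp [h]⟩
  obtain ⟨a, b, rfl, hab⟩ := exists_eq_mul_of_two_le_count (by omega : 2 ≤ count () w)
  have := one_le_count a
  simp only [count_mul] at h
  rw [count_eq_one_iff.mp (by omega : count () a = 1),
    count_eq_two_iff.mp (by omega : count () b = 2)]

lemma count_eq_four_iff {w : FreeCommMagma Unit} :
    count () w = 4 ↔ w = x1 * (x1 * (x1 * x1)) ∨ w = (x1 * x1) * (x1 * x1) := by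
  refine ⟨fun h => ?_, fun h => by rcases h with rfl | rfl <;> simp⟩
  obtain ⟨a, b, rfl, hab⟩ := exists_eq_mul_of_two_le_count (by omega : 2 ≤ count () w)
  have := one_le_count a
  simp only [count_mul] at h
  obtain ha | ha : count () a = 1 ∨ count () a = 2 := by omega
  · left
    rw [count_eq_one_iff.mp ha, count_eq_three_iff.mp (by omega : count () b = 3)]
  · right
    rw [count_eq_two_iff.mp ha, count_eq_two_iff.mp (by omega : count () b = 2)]

lemma count_eq_five_iff {w : FreeCommMagma Unit} :
    count () w = 5 ↔ w = x1 * (x1 * (x1 * (x1 * x1))) ∨ w = x1 * ((x1 * x1) * (x1 * x1)) ∨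
      w = (x1 * x1) * (x1 * (x1 * x1)) := by
  refine ⟨fun h => ?_, fun h => by rcases h with rfl | rfl | rfl <;> simp⟩
  obtain ⟨a, b, rfl, hab⟩ := exists_eq_mul_of_two_le_count (by omega : 2 ≤ count () w)
  have := one_le_count a
  simp only [count_mul] at h
  obtain ha | ha : count () a = 1 ∨ count () a = 2 := by omega
  · rw [count_eq_one_iff.mp ha]
    rcases count_eq_four_iff.mp (by omega : count () b = 4) with rfl | rfl
    exacts [.inl rfl, .inr (.inl rfl)]
  · right; right
    rw [count_eq_two_iff.mp ha, count_eq_three_iff.mp (by omega : count () b = 3)]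

section Homogeneous

variable (K : Type*) [Field K] (n : ℕ)

noncomputable def homogeneousSubmodule : Submodule K (MonoidAlgebra K (FreeCommMagma Unit)) :=
  Submodule.span K (mono K '' {w | count () w = n})

lemma homEvan_eq :
    homEvan K n =
      homogeneousSubmodule K n ⊓ LinearMap.ker (aug K) ⊓ LinearMap.ker (Dp K ()) := rfl

variable {K n}

lemma homEvan_le_homogeneousSubmodule : homEvan K n ≤ homogeneousSubmodule K n :=
  inf_le_left.trans inf_le_left

lemma homEvan_eq_bot_of_setOf_count_eq_singleton {m : FreeCommMagma Unit}
    (hm : {w | count () w = n} = {m}) : homEvan K n = ⊥ := by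
  refine eq_bot_iff.mpr fun f hf => ?_
  rw [homEvan_eq, homogeneousSubmodule, hm, Set.image_singleton] at hf
  obtain ⟨⟨hspan, haug⟩, -⟩ := hf
  obtain ⟨a, rfl⟩ := Submodule.mem_span_singleton.mp hspan
  simp_all

lemma homEvan_four_eq_bot : homEvan K 4 = ⊥ := by
  refine eq_bot_iff.mpr fun f hf => ?_
  have hS : {w | count () w = 4} = {x1 * (x1 * (x1 * x1)), (x1 * x1) * (x1 * x1)} :=
    Set.ext fun _ => count_eq_four_iff
  rw [homEvan_eq, homogeneousSubmodule, hS, Set.image_pair] at hf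
  obtain ⟨⟨hspan, haug⟩, hDp⟩ := hf
  obtain ⟨a, b, rfl⟩ := Submodule.mem_span_pair.mp hspan
  have ha : a = 0 := by simpa using congrArg (coeff · 1) hDp
  have hb : b = 0 := by simpa [ha] using haug
  simp [ha, hb]

lemma homEvan_five_eq_bot : homEvan K 5 = ⊥ := by
  refine eq_bot_iff.mpr fun f hf => ?_
  have hS : {w | count () w = 5} = {x1 * (x1 * (x1 * (x1 * x1))), x1 * ((x1 * x1) * (x1 * x1)),
      (x1 * x1) * (x1 * (x1 * x1))} :=
    Set.ext fun _ => count_eq_five_iff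
  rw [homEvan_eq, homogeneousSubmodule, hS, Set.image_insert_eq, Set.image_pair] at hf
  obtain ⟨⟨hspan, haug⟩, hDp⟩ := hf
  obtain ⟨a, g, hg, rfl⟩ := Submodule.mem_span_insert.mp hspan
  obtain ⟨b, c, rfl⟩ := Submodule.mem_span_pair.mp hg
  have hε : a + (b + c) = 0 := by simpa using haug
  have h1 : a + b = 0 := by simpa using congrArg (coeff · 1) hDp
  have h2 : a + c * 3 = 0 := by
    simpa [coeff_one, show (1 : K) + 1 + 1 = 3 by norm_num] using congrArg (coeff · 2) hDp
  have hc : c = 0 := by linear_combination hε - h1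
  have ha : a = 0 := by linear_combination h2 - 3 * hc
  have hb : b = 0 := by linear_combination h1 - ha
  simp [ha, hb, hc]

lemma homEvan_eq_bot (h2 : 2 ≤ n) (h5 : n ≤ 5) : homEvan K n = ⊥ := by
  interval_cases n
  · exact homEvan_eq_bot_of_setOf_count_eq_singleton (Set.ext fun _ => count_eq_two_iff)
  · exact homEvan_eq_bot_of_setOf_count_eq_singleton (Set.ext fun _ => count_eq_three_iff)
  · exact homEvan_four_eq_bot
  · exact homEvan_five_eq_bot

end Homogeneous

lemma _root_.Submodule.finrank_le_finrank_inf_ker_add {K M W : Type*} [Field K] [AddCommGroup M]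
    [Module K M] [AddCommGroup W] [Module K W] [FiniteDimensional K W]
    (V : Submodule K M) [FiniteDimensional K V] (L : M →ₗ[K] W) :
    finrank K V ≤ finrank K (V ⊓ LinearMap.ker L : Submodule K M) + finrank K W := by
  have hker : finrank K (LinearMap.ker (L.domRestrict V)) =
      finrank K (V ⊓ LinearMap.ker L : Submodule K M) := by
    rw [LinearMap.ker_domRestrict, ← Submodule.map_comap_subtype]
    exact (Submodule.equivMapOfInjective _ V.injective_subtype _).finrank_eq
  have := LinearMap.finrank_range_add_finrank_ker (L.domRestrict V)
  have := Submodule.finrank_le (LinearMap.range (L.domRestrict V))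
  omega

section LowerBound

variable {K : Type*} [Field K] {n : ℕ}

instance : FiniteDimensional K (homogeneousSubmodule K n) :=
  FiniteDimensional.span_of_finite K ((finite_setOf_count_eq n).image _)

lemma finrank_homogeneousSubmodule (n : ℕ) : finrank K (homogeneousSubmodule K n) = Wn n := by
  have := (finite_setOf_count_eq n).fintype
  have hli : LinearIndependent K fun w : {w | count () w = n} => mono K w.1 :=
    (MonoidAlgebra.basis (FreeCommMagma Unit) K).linearIndependent.comp _ Subtype.val_injective
  rw [homogeneousSubmodule, Set.image_eq_range, finrank_span_eq_card hli]
  exact Nat.card_eq_fintype_card.symm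

lemma eqOn_homogeneousSubmodule {M : Type*} [AddCommMonoid M] [Module K M]
    {F G : MonoidAlgebra K (FreeCommMagma Unit) →ₗ[K] M}
    (h : ∀ w, count () w = n → F (mono K w) = G (mono K w)) :
    Set.EqOn F G (homogeneousSubmodule K n) :=
  LinearMap.eqOn_span' (Set.forall_mem_image.mpr h)

variable {f : MonoidAlgebra K (FreeCommMagma Unit)}

lemma eval_one_Dp_of_mem_homogeneousSubmodule (hf : f ∈ homogeneousSubmodule K n) :
    (Dp K () f).eval 1 = n * aug K f :=
  eqOn_homogeneousSubmodule (F := leval 1 ∘ₗ Dp K ()) (G := (n : K) • aug K)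
    (fun w hw => by simp [eval_one_peirce, hw]) hf

lemma eval_half_Dp_of_mem_homogeneousSubmodule [NeZero (2 : K)]
    (hf : f ∈ homogeneousSubmodule K n) :
    (Dp K () f).eval 2⁻¹ = aug K f :=
  eqOn_homogeneousSubmodule (F := leval 2⁻¹ ∘ₗ Dp K ()) (G := aug K)
    (fun w _ => by simp [eval_half_peirce]) hf

lemma coeff_zero_Dp_of_mem_homogeneousSubmodule (hn : 2 ≤ n)
    (hf : f ∈ homogeneousSubmodule K n) :
    (Dp K () f).coeff 0 = 0 :=
  eqOn_homogeneousSubmodule (F := lcoeff K 0 ∘ₗ Dp K ()) (G := 0)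
    (fun w hw => by simp [coeff_zero_peirce_of_two_le_count (hw ▸ hn)]) hf

lemma coeff_Dp_of_mem_homogeneousSubmodule {k : ℕ} (hk : n ≤ k)
    (hf : f ∈ homogeneousSubmodule K n) :
    (Dp K () f).coeff k = 0 :=
  eqOn_homogeneousSubmodule (F := lcoeff K k ∘ₗ Dp K ()) (G := 0)
    (fun w hw => by simp [coeff_peirce_of_count_le (hw ▸ hk)]) hf

lemma Dp_eq_C_mul_X_of_mem_homogeneousSubmodule (hn : 2 ≤ n)
    (hf : f ∈ homogeneousSubmodule K n)
    (hmid : ∀ k, 2 ≤ k → k < n → (Dp K () f).coeff k = 0) :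
    Dp K () f = C ((Dp K () f).coeff 1) * X := by
  ext k
  rw [coeff_C_mul_X]
  obtain rfl | rfl | hk := show k = 0 ∨ k = 1 ∨ 2 ≤ k by omega
  · exact coeff_zero_Dp_of_mem_homogeneousSubmodule hn hf
  · rfl
  · rw [if_neg (by omega)]
    exact (lt_or_ge k n).elim (hmid k hk) (coeff_Dp_of_mem_homogeneousSubmodule · hf)

lemma mem_homEvan_of_mem_homogeneousSubmodule [CharZero K] (hn : 3 ≤ n)
    (hf : f ∈ homogeneousSubmodule K n)
    (hmid : ∀ k, 2 ≤ k → k < n → (Dp K () f).coeff k = 0) : f ∈ homEvan K n := by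
  have hDp := Dp_eq_C_mul_X_of_mem_homogeneousSubmodule (by omega) hf hmid
  set c := (Dp K () f).coeff 1
  have h1 := eval_one_Dp_of_mem_homogeneousSubmodule hf
  have h2 := eval_half_Dp_of_mem_homogeneousSubmodule hf
  rw [hDp] at h1 h2
  simp only [eval_mul, eval_C, eval_X, mul_one] at h1 h2
  have hn2 : (n : K) - 2 ≠ 0 := sub_ne_zero.mpr (by exact_mod_cast (by omega : n ≠ 2))
  have hn2aug : ((n : K) - 2) * aug K f = 0 := by linear_combination 2 * h2 - h1
  have haug : aug K f = 0 := (mul_eq_zero.mp hn2aug).resolve_left hn2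
  have hc : c = 0 := by rw [h1, haug, mul_zero]
  exact ⟨⟨hf, haug⟩, LinearMap.mem_ker.mpr (by rw [hDp, hc, C_0, zero_mul])⟩

variable (K n) in
noncomputable def peirceMidCoeffs :
    MonoidAlgebra K (FreeCommMagma Unit) →ₗ[K] (Fin (n - 2) → K) :=
  LinearMap.pi fun k => lcoeff K (k + 2) ∘ₗ Dp K ()

lemma homogeneousSubmodule_inf_ker_peirceMidCoeffs_le [CharZero K] (hn : 3 ≤ n) :
    homogeneousSubmodule K n ⊓ LinearMap.ker (peirceMidCoeffs K n) ≤ homEvan K n := by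
  rintro f ⟨hf, hmid⟩
  refine mem_homEvan_of_mem_homogeneousSubmodule hn hf fun k hk2 hkn => ?_
  simpa [peirceMidCoeffs, Nat.sub_add_cancel hk2] using congrFun hmid ⟨k - 2, by omega⟩

lemma Wn_le_finrank_homEvan_add [CharZero K] (hn : 3 ≤ n) :
    Wn n ≤ finrank K (homEvan K n) + (n - 2) := by
  have : FiniteDimensional K (homEvan K n) :=
    Submodule.finiteDimensional_of_le homEvan_le_homogeneousSubmodule
  calc Wn n = finrank K (homogeneousSubmodule K n) := (finrank_homogeneousSubmodule n).symm
    _ ≤ finrank K (homogeneousSubmodule K n ⊓ LinearMap.ker (peirceMidCoeffs K n) :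
          Submodule K _) + finrank K (Fin (n - 2) → K) :=
      Submodule.finrank_le_finrank_inf_ker_add _ _
    _ ≤ finrank K (homEvan K n) + (n - 2) := by
      rw [Module.finrank_fin_fun]
      gcongr
      exact Submodule.finrank_mono (homogeneousSubmodule_inf_ker_peirceMidCoeffs_le hn)

end LowerBound

end Evanescent

open Evanescent in
/-- Over a field of characteristic zero: (i) there is no homogeneous
Peirce-evanescent identity of type `[n]` for `2 ≤ n ≤ 5`; (ii) for `n ≥ 6` the space of
homogeneous Peirce-evanescent identities of type `[n]` has dimension at least
`W_n − n + 2`. -/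
theorem homogeneous_evanescent_univariate
    {K : Type*} [Field K] [CharZero K] :
    (∀ n : ℕ, 2 ≤ n → n ≤ 5 → ∀ f ∈ homEvan K n, f = 0) ∧
    (∀ n : ℕ, 6 ≤ n →
      (Wn n : ℤ) - n + 2 ≤ (Module.finrank K (homEvan K n) : ℤ)) := by
  refine ⟨fun n h2 h5 f hf => ?_, fun n hn => ?_⟩
  · rwa [homEvan_eq_bot h2 h5, Submodule.mem_bot] at hf
  · have := Wn_le_finrank_homEvan_add (K := K) (by omega : 3 ≤ n)
    omega
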